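/- Let F be the simplicial complex on four vertices v1,…,v4 whose edge set is the downward closure of {{v1,v2,v3}, {v2,v3,v4}, {v1,v4}}. For every ε > 0 there is n0 ∈ ℕ such that for every n ≥ n0, (2/9 − ε)·binom(n,3) ≤ ex(n,F) ≤ (2/9 + ε)·binom(n,3). -/

import Mathlib

open Finset

/-- `E` is the edge set of a simplicial complex: it is closed under taking subsets. -/
def IsComplex {α : Type*} [DecidableEq α] (E : Finset (Finset α)) : Prop :=
  ∀ e ∈ E, ∀ f ⊆ e, f ∈ E

/-- `H` contains a copy of `F`: an injection of the vertices mapping edges to edges. -/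
def HasCopy {α β : Type*} [DecidableEq β]
    (F : Finset (Finset α)) (H : Finset (Finset β)) : Prop :=
  ∃ f : α → β, Function.Injective f ∧ ∀ e ∈ F, e.image f ∈ H

/-- downward closure of a family of sets -/
def dClosure {α : Type*} [DecidableEq α] (S : Finset (Finset α)) : Finset (Finset α) :=
  S.biUnion Finset.powerset

/-- `ex(n,F)`: the extremal number for simplicial complexes -/
noncomputable def exSC {α : Type*} (n : ℕ) (F : Finset (Finset α)) : ℕ :=
  sSup {m | ∃ E : Finset (Finset (Fin n)), IsComplex E ∧ ¬ HasCopy F E ∧ E.card = m}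

/-- `ex^(k)(n,F)`: the extremal number for `k`-uniform hypergraphs -/
noncomputable def exUnif {α : Type*} (k n : ℕ) (F : Finset (Finset α)) : ℕ :=
  sSup {m | ∃ E : Finset (Finset (Fin n)),
    (∀ e ∈ E, e.card = k) ∧ ¬ HasCopy F E ∧ E.card = m}

/-- downward closure of `{{v1,v2,v3},{v2,v3,v4},{v1,v4}}` with `v1,…,v4 = 0,…,3` -/
def F4 : Finset (Finset (Fin 4)) :=
  dClosure {{0, 1, 2}, {1, 2, 3}, {0, 3}}

section Proof

variable {n : ℕ}

lemma two_choose : ∀ m : ℕ, 2 * (m+1).choose 2 = (m+1) * m := by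
  intro m
  induction m with
  | zero => decide
  | succ m ih =>
    rw [Nat.choose_succ_succ (m+1) 1, Nat.mul_add, ih, Nat.choose_one_right]
    ring

lemma three_choose : ∀ m : ℕ, 6 * (m+2).choose 3 = (m+2) * (m+1) * m := by
  intro m
  induction m with
  | zero => decide
  | succ m ih =>
    have h : (m+3).choose 3 = (m+2).choose 2 + (m+2).choose 3 := Nat.choose_succ_succ (m+2) 2
    calc 6 * (m+3).choose 3 = 3 * (2 * (m+2).choose 2) + 6 * (m+2).choose 3 := by rw [h]; ring
      _ = 3 * ((m+2) * (m+1)) + (m+2) * (m+1) * m := by rw [two_choose (m+1), ih]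
      _ = (m+3) * (m+2) * (m+1) := by ring

lemma six_choose3 (n : ℕ) (h : 2 ≤ n) : 6 * n.choose 3 = n * (n-1) * (n-2) := by
  obtain ⟨m, rfl⟩ : ∃ m, n = m + 2 := ⟨n - 2, by omega⟩
  rw [three_choose m]
  congr 1 <;> omega

lemma cast_choose3 (h : 2 ≤ n) :
    (n.choose 3 : ℝ) = (n:ℝ) * ((n:ℝ)-1) * ((n:ℝ)-2) / 6 := by
  have h6 := six_choose3 n h
  have := congrArg (fun k : ℕ => (k : ℝ)) h6
  push_cast at this
  rw [Nat.cast_sub (by omega : 1 ≤ n), Nat.cast_sub (by omega : 2 ≤ n)] at this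
  push_cast at this
  linarith

lemma caseB (T : Finset (Finset (Fin n)))
    (h3 : ∀ e ∈ T, e.card = 3)
    (hc : ∀ A ∈ T, ∀ B ∈ T, A ≠ B → ∀ C ∈ T, ¬((A \ B) ∪ (B \ A) ⊆ C))
    (w : Fin n → ℝ) (hw : ∀ v, 0 ≤ w v)
    (hcov : ∀ u v : Fin n, u ≠ v → w u ≠ 0 → w v ≠ 0 → ∃ e ∈ T, u ∈ e ∧ v ∈ e) :
    ∑ e ∈ T, ∏ x ∈ e, w x ≤ (∑ v, w v)^3 / 27 := by
  classical
  set s : ℝ := ∑ v, w v with hs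
  have hs0 : 0 ≤ s := Finset.sum_nonneg fun v _ => hw v
  set T' : Finset (Finset (Fin n)) := T.filter (fun e => ∀ x ∈ e, w x ≠ 0) with hT'
  have hT'sub : T' ⊆ T := Finset.filter_subset _ _
  have hred : ∑ e ∈ T, ∏ x ∈ e, w x = ∑ e ∈ T', ∏ x ∈ e, w x := by
    rw [← Finset.sum_filter_add_sum_filter_not T (fun e => ∀ x ∈ e, w x ≠ 0)]
    have hz : ∑ e ∈ T.filter (fun e => ¬ ∀ x ∈ e, w x ≠ 0), ∏ x ∈ e, w x = 0 := by
      apply Finset.sum_eq_zero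
      intro e he
      rw [Finset.mem_filter] at he
      push_neg at he
      obtain ⟨x, hx, hwx⟩ := he.2
      exact Finset.prod_eq_zero hx hwx
    rw [hz, add_zero]
  rw [hred]
  -- matching property
  have hmatch : ∀ e1 ∈ T', ∀ e2 ∈ T', e1 ≠ e2 → ∀ u, u ∈ e1 → u ∈ e2 →
      Disjoint (e1.erase u) (e2.erase u) := by
    intro e1 he1 e2 he2 hne u hu1 hu2
    rw [Finset.disjoint_left]
    intro x hx1 hx2
    have hxu : x ≠ u := Finset.ne_of_mem_erase hx1
    have hx1' : x ∈ e1 := Finset.mem_of_mem_erase hx1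
    have hx2' : x ∈ e2 := Finset.mem_of_mem_erase hx2
    have he1T : e1 ∈ T := hT'sub he1
    have he2T : e2 ∈ T := hT'sub he2
    have hcard1 : e1.card = 3 := h3 e1 he1T
    have hcard2 : e2.card = 3 := h3 e2 he2T
    have hsub : ({u, x} : Finset (Fin n)) ⊆ e1 ∩ e2 := by
      intro y hy
      rw [Finset.mem_insert, Finset.mem_singleton] at hy
      rcases hy with rfl | rfl <;> simp [Finset.mem_inter, hu1, hu2, hx1', hx2']
    have hint : 2 ≤ (e1 ∩ e2).card := by
      calc 2 = ({u, x} : Finset (Fin n)).card := (Finset.card_pair (Ne.symm hxu)).symm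
        _ ≤ (e1 ∩ e2).card := Finset.card_le_card hsub
    have hintlt : (e1 ∩ e2).card ≠ 3 := by
      intro h
      have : e1 ∩ e2 = e1 := Finset.eq_of_subset_of_card_le Finset.inter_subset_left (by omega)
      have : e1 ⊆ e2 := by rw [← this]; exact Finset.inter_subset_right
      exact hne (Finset.eq_of_subset_of_card_le this (by omega))
    have hintle : (e1 ∩ e2).card ≤ 3 := hcard1 ▸ Finset.card_le_card Finset.inter_subset_left
    have h1 : (e1 ∩ e2).card + (e1 \ e2).card = e1.card := Finset.card_inter_add_card_sdiff e1 e2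
    have h2 : (e2 ∩ e1).card + (e2 \ e1).card = e2.card := Finset.card_inter_add_card_sdiff e2 e1
    rw [Finset.inter_comm] at h2
    obtain ⟨a, ha⟩ := Finset.card_eq_one.mp (show (e1 \ e2).card = 1 by omega)
    obtain ⟨b, hb⟩ := Finset.card_eq_one.mp (show (e2 \ e1).card = 1 by omega)
    have haa : a ∈ e1 \ e2 := ha ▸ Finset.mem_singleton_self a
    have hbb : b ∈ e2 \ e1 := hb ▸ Finset.mem_singleton_self b
    rw [Finset.mem_sdiff] at haa hbb
    have hab : a ≠ b := fun h => hbb.2 (h ▸ haa.1)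
    have hwa : w a ≠ 0 := (Finset.mem_filter.mp he1).2 a haa.1
    have hwb : w b ≠ 0 := (Finset.mem_filter.mp he2).2 b hbb.1
    obtain ⟨C, hC, haC, hbC⟩ := hcov a b hab hwa hwb
    refine hc e1 he1T e2 he2T hne C hC ?_
    rw [ha, hb]
    intro y hy
    rw [Finset.mem_union, Finset.mem_singleton, Finset.mem_singleton] at hy
    rcases hy with rfl | rfl
    · exact haC
    · exact hbC
  -- sigma2
  set g : Finset (Fin n) → ℝ := fun e => ((∑ x ∈ e, w x)^2 - ∑ x ∈ e, (w x)^2)/2 with hg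
  -- Step A : per-edge AM-GM
  have stepA : ∀ e ∈ T', 9 * ∏ x ∈ e, w x ≤ (∑ x ∈ e, w x) * g e := by
    intro e he
    obtain ⟨a, b, c, hab, hac, hbc, rfl⟩ := Finset.card_eq_three.mp (h3 e (hT'sub he))
    have h1 : ∑ x ∈ ({a,b,c} : Finset (Fin n)), w x = w a + w b + w c := by
      rw [Finset.sum_insert (by simp [hab, hac]), Finset.sum_insert (by simp [hbc]),
        Finset.sum_singleton]; ring
    have h2 : ∑ x ∈ ({a,b,c} : Finset (Fin n)), (w x)^2 = (w a)^2 + (w b)^2 + (w c)^2 := by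
      rw [Finset.sum_insert (by simp [hab, hac]), Finset.sum_insert (by simp [hbc]),
        Finset.sum_singleton]; ring
    have h3' : ∏ x ∈ ({a,b,c} : Finset (Fin n)), w x = w a * w b * w c := by
      rw [Finset.prod_insert (by simp [hab, hac]), Finset.prod_insert (by simp [hbc]),
        Finset.prod_singleton, mul_assoc]
    rw [h1, h3', hg]
    simp only [h1, h2]
    nlinarith [mul_nonneg (hw a) (sq_nonneg (w b - w c)), mul_nonneg (hw b) (sq_nonneg (w a - w c)),
      mul_nonneg (hw c) (sq_nonneg (w a - w b))]
  -- Step C : regrouping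
  have stepC : ∑ e ∈ T', (∑ x ∈ e, w x) * g e
      = ∑ u, w u * ∑ e ∈ T'.filter (fun e => u ∈ e), g e := by
    have h1 : ∀ e ∈ T', (∑ x ∈ e, w x) * g e = ∑ x ∈ e, w x * g e := fun e _ => Finset.sum_mul _ _ _
    rw [Finset.sum_congr rfl h1]
    rw [Finset.sum_comm' (s := T') (t := fun e => e) (t' := (univ : Finset (Fin n)))
      (s' := fun u => T'.filter (fun e => u ∈ e)) (by intro e u; simp [Finset.mem_filter])]
    apply Finset.sum_congr rfl
    intro u _
    rw [Finset.mul_sum]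
  -- Step D : per-vertex bound
  have stepD : ∀ u : Fin n, ∑ e ∈ T'.filter (fun e => u ∈ e), g e ≤ s^2/3 := by
    intro u
    set Tu := T'.filter (fun e => u ∈ e) with hTu
    have hwu : w u ≤ s := Finset.single_le_sum (fun v _ => hw v) (Finset.mem_univ u)
    set t : Finset (Fin n) → ℝ := fun e => ∑ x ∈ e.erase u, w x with ht
    set p : Finset (Fin n) → ℝ := fun e => ∏ x ∈ e.erase u, w x with hp
    have hD1 : ∀ e ∈ Tu, g e = w u * t e + p e ∧ p e ≤ (t e)^2/4 := by
      intro e he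
      rw [hTu, Finset.mem_filter] at he
      obtain ⟨he', hue⟩ := he
      have hcard : (e.erase u).card = 2 := by
        rw [Finset.card_erase_of_mem hue, h3 e (hT'sub he')]
      obtain ⟨a, b, hab, hab2⟩ := Finset.card_eq_two.mp hcard
      have hau : a ≠ u := Finset.ne_of_mem_erase (hab2 ▸ (by simp : a ∈ ({a,b} : Finset (Fin n))))
      have hbu : b ≠ u := Finset.ne_of_mem_erase (hab2 ▸ (by simp : b ∈ ({a,b} : Finset (Fin n))))
      have he2 : e = insert u ({a, b} : Finset (Fin n)) := by rw [← hab2, Finset.insert_erase hue]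
      have hsum : ∑ x ∈ e, w x = w u + (w a + w b) := by
        rw [he2, Finset.sum_insert (by simp [hau.symm, hbu.symm]),
          Finset.sum_insert (by simp [hab]), Finset.sum_singleton]
      have hsumsq : ∑ x ∈ e, (w x)^2 = (w u)^2 + ((w a)^2 + (w b)^2) := by
        rw [he2, Finset.sum_insert (by simp [hau.symm, hbu.symm]),
          Finset.sum_insert (by simp [hab]), Finset.sum_singleton]
      have htv : t e = w a + w b := by
        show (∑ x ∈ e.erase u, w x) = w a + w b
        rw [hab2, Finset.sum_insert (by simp [hab]), Finset.sum_singleton]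
      have hpv : p e = w a * w b := by
        show (∏ x ∈ e.erase u, w x) = w a * w b
        rw [hab2, Finset.prod_insert (by simp [hab]), Finset.prod_singleton]
      constructor
      · show ((∑ x ∈ e, w x)^2 - ∑ x ∈ e, (w x)^2)/2 = w u * t e + p e
        rw [hsum, hsumsq, htv, hpv]; ring
      · rw [htv, hpv]; nlinarith [sq_nonneg (w a - w b)]
    have htnn : ∀ e ∈ Tu, 0 ≤ t e := fun e _ => Finset.sum_nonneg fun x _ => hw x
    have hpd : (Tu : Set (Finset (Fin n))).PairwiseDisjoint (fun e => e.erase u) := by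
      intro e1 he1 e2 he2 hne
      have m1 := Finset.mem_coe.mp he1
      have m2 := Finset.mem_coe.mp he2
      rw [hTu, Finset.mem_filter] at m1 m2
      exact hmatch e1 m1.1 e2 m2.1 hne u m1.2 m2.2
    have hD2 : ∑ e ∈ Tu, t e ≤ s - w u := by
      have h1 : ∑ e ∈ Tu, t e = ∑ x ∈ Tu.biUnion (fun e => e.erase u), w x :=
        (Finset.sum_biUnion hpd).symm
      rw [h1]
      have h2 : Tu.biUnion (fun e => e.erase u) ⊆ univ.erase u := by
        intro x hx
        rw [Finset.mem_biUnion] at hx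
        obtain ⟨e, _, hxe⟩ := hx
        exact Finset.mem_erase.mpr ⟨Finset.ne_of_mem_erase hxe, Finset.mem_univ x⟩
      calc ∑ x ∈ Tu.biUnion (fun e => e.erase u), w x
          ≤ ∑ x ∈ univ.erase u, w x :=
            Finset.sum_le_sum_of_subset_of_nonneg h2 (fun x _ _ => hw x)
        _ = s - w u := Finset.sum_erase_eq_sub (Finset.mem_univ u)
    have hts : 0 ≤ ∑ e ∈ Tu, t e := Finset.sum_nonneg htnn
    have hD3 : ∑ e ∈ Tu, (t e)^2 ≤ (∑ e ∈ Tu, t e)^2 := by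
      have h1 : ∀ e ∈ Tu, (t e)^2 ≤ t e * ∑ e' ∈ Tu, t e' := by
        intro e he
        have : t e ≤ ∑ e' ∈ Tu, t e' := Finset.single_le_sum htnn he
        calc (t e)^2 = t e * t e := sq (t e) ▸ rfl
          _ ≤ t e * ∑ e' ∈ Tu, t e' := mul_le_mul_of_nonneg_left this (htnn e he)
      calc ∑ e ∈ Tu, (t e)^2 ≤ ∑ e ∈ Tu, t e * ∑ e' ∈ Tu, t e' := Finset.sum_le_sum h1
        _ = (∑ e ∈ Tu, t e)^2 := by rw [← Finset.sum_mul, sq]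
    calc ∑ e ∈ Tu, g e = ∑ e ∈ Tu, (w u * t e + p e) :=
          Finset.sum_congr rfl (fun e he => (hD1 e he).1)
      _ = w u * ∑ e ∈ Tu, t e + ∑ e ∈ Tu, p e := by rw [Finset.sum_add_distrib, Finset.mul_sum]
      _ ≤ w u * (s - w u) + (s - w u)^2/4 := by
          have hp4 : ∑ e ∈ Tu, p e ≤ (s - w u)^2/4 := by
            calc ∑ e ∈ Tu, p e ≤ ∑ e ∈ Tu, (t e)^2/4 :=
                  Finset.sum_le_sum (fun e he => (hD1 e he).2)
              _ = (∑ e ∈ Tu, (t e)^2)/4 := by rw [Finset.sum_div]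
              _ ≤ (∑ e ∈ Tu, t e)^2/4 := by linarith [hD3]
              _ ≤ (s - w u)^2/4 := by nlinarith [hD2, hts]
          have hw4 : w u * ∑ e ∈ Tu, t e ≤ w u * (s - w u) :=
            mul_le_mul_of_nonneg_left hD2 (hw u)
          linarith
      _ ≤ s^2/3 := by nlinarith [sq_nonneg (s - 3 * w u)]
  -- combine
  have main : 9 * ∑ e ∈ T', ∏ x ∈ e, w x ≤ s^3/3 := by
    calc 9 * ∑ e ∈ T', ∏ x ∈ e, w x = ∑ e ∈ T', 9 * ∏ x ∈ e, w x := by rw [Finset.mul_sum]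
      _ ≤ ∑ e ∈ T', (∑ x ∈ e, w x) * g e := Finset.sum_le_sum stepA
      _ = ∑ u, w u * ∑ e ∈ T'.filter (fun e => u ∈ e), g e := stepC
      _ ≤ ∑ u, w u * (s^2/3) := by
          apply Finset.sum_le_sum
          intro u _
          exact mul_le_mul_of_nonneg_left (stepD u) (hw u)
      _ = s * (s^2/3) := by rw [← Finset.sum_mul]
      _ = s^3/3 := by ring
  linarith

lemma sumdecomp (T : Finset (Finset (Fin n))) (u v : Fin n)
    (hno : ∀ e ∈ T, ¬(u ∈ e ∧ v ∈ e)) (W : Fin n → ℝ) :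
    ∑ e ∈ T, ∏ x ∈ e, W x =
      W u * (∑ e ∈ T.filter (fun e => u ∈ e), ∏ x ∈ e.erase u, W x)
      + W v * (∑ e ∈ T.filter (fun e => v ∈ e), ∏ x ∈ e.erase v, W x)
      + ∑ e ∈ T.filter (fun e => u ∉ e ∧ v ∉ e), ∏ x ∈ e, W x := by
  classical
  rw [← Finset.sum_filter_add_sum_filter_not T (fun e => u ∈ e)]
  have h1 : ∑ e ∈ T.filter (fun e => u ∈ e), ∏ x ∈ e, W x
      = W u * ∑ e ∈ T.filter (fun e => u ∈ e), ∏ x ∈ e.erase u, W x := by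
    rw [Finset.mul_sum]
    apply Finset.sum_congr rfl
    intro e he
    rw [Finset.mem_filter] at he
    exact (Finset.mul_prod_erase e W he.2).symm
  have h2 : T.filter (fun e => ¬ u ∈ e) =
      (T.filter (fun e => v ∈ e)) ∪ (T.filter (fun e => u ∉ e ∧ v ∉ e)) := by
    ext e
    simp only [Finset.mem_filter, Finset.mem_union]
    constructor
    · rintro ⟨heT, hue⟩
      by_cases hv : v ∈ e
      · exact Or.inl ⟨heT, hv⟩
      · exact Or.inr ⟨heT, hue, hv⟩
    · rintro (⟨heT, hv⟩ | ⟨heT, hue, hv⟩)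
      · exact ⟨heT, fun hu => hno e heT ⟨hu, hv⟩⟩
      · exact ⟨heT, hue⟩
  have hdisj : Disjoint (T.filter (fun e => v ∈ e)) (T.filter (fun e => u ∉ e ∧ v ∉ e)) := by
    rw [Finset.disjoint_left]
    intro e he1 he2
    rw [Finset.mem_filter] at he1 he2
    exact he2.2.2 he1.2
  have h3 : ∑ e ∈ T.filter (fun e => ¬ u ∈ e), ∏ x ∈ e, W x
      = W v * (∑ e ∈ T.filter (fun e => v ∈ e), ∏ x ∈ e.erase v, W x)
        + ∑ e ∈ T.filter (fun e => u ∉ e ∧ v ∉ e), ∏ x ∈ e, W x := by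
    rw [h2, Finset.sum_union hdisj]
    congr 1
    rw [Finset.mul_sum]
    apply Finset.sum_congr rfl
    intro e he
    rw [Finset.mem_filter] at he
    exact (Finset.mul_prod_erase e W he.2).symm
  rw [h1, h3]
  ring

lemma shiftStep (T : Finset (Finset (Fin n))) (w : Fin n → ℝ) (hw : ∀ x, 0 ≤ w x)
    (u v : Fin n) (huv : u ≠ v)
    (hno : ∀ e ∈ T, ¬(u ∈ e ∧ v ∈ e))
    (hP : ∑ e ∈ T.filter (fun e => v ∈ e), ∏ x ∈ e.erase v, w x
        ≤ ∑ e ∈ T.filter (fun e => u ∈ e), ∏ x ∈ e.erase u, w x) :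
    ∃ w' : Fin n → ℝ, (∀ x, 0 ≤ w' x) ∧ w' v = 0 ∧ (∀ x, x ≠ u → x ≠ v → w' x = w x) ∧
      (∑ x, w' x = ∑ x, w x) ∧ ∑ e ∈ T, ∏ x ∈ e, w x ≤ ∑ e ∈ T, ∏ x ∈ e, w' x := by
  classical
  set w' : Fin n → ℝ := fun x => if x = v then 0 else if x = u then w u + w v else w x with hw'
  have hw'v : w' v = 0 := by simp [hw']
  have hw'u : w' u = w u + w v := by simp [hw', huv]
  have hw'other : ∀ x, x ≠ u → x ≠ v → w' x = w x := by
    intro x hxu hxv; simp [hw', hxu, hxv]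
  have hw'nn : ∀ x, 0 ≤ w' x := by
    intro x
    rcases eq_or_ne x v with rfl | hxv
    · rw [hw'v]
    · rcases eq_or_ne x u with rfl | hxu
      · rw [hw'u]; exact add_nonneg (hw x) (hw v)
      · rw [hw'other x hxu hxv]; exact hw x
  refine ⟨w', hw'nn, hw'v, hw'other, ?_, ?_⟩
  · -- total sum preserved
    have hvmem : v ∈ (univ : Finset (Fin n)).erase u := Finset.mem_erase.mpr ⟨huv.symm, Finset.mem_univ v⟩
    have k : ∀ W : Fin n → ℝ, ∑ x, W x = W u + (W v + ∑ x ∈ ((univ : Finset (Fin n)).erase u).erase v, W x) := by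
      intro W
      rw [← Finset.add_sum_erase _ W (Finset.mem_univ u), ← Finset.add_sum_erase _ W hvmem]
    rw [k w', k w, hw'u, hw'v]
    have : ∑ x ∈ ((univ : Finset (Fin n)).erase u).erase v, w' x
        = ∑ x ∈ ((univ : Finset (Fin n)).erase u).erase v, w x := by
      apply Finset.sum_congr rfl
      intro x hx
      rw [Finset.mem_erase, Finset.mem_erase] at hx
      exact hw'other x hx.2.1 hx.1
    rw [this]; ring
  · -- sum over edges does not decrease
    rw [sumdecomp T u v hno w, sumdecomp T u v hno w']
    have e1 : ∑ e ∈ T.filter (fun e => u ∈ e), ∏ x ∈ e.erase u, w' x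
        = ∑ e ∈ T.filter (fun e => u ∈ e), ∏ x ∈ e.erase u, w x := by
      apply Finset.sum_congr rfl
      intro e he
      rw [Finset.mem_filter] at he
      apply Finset.prod_congr rfl
      intro x hx
      have hxu : x ≠ u := Finset.ne_of_mem_erase hx
      have hxv : x ≠ v := by
        intro h
        exact hno e he.1 ⟨he.2, h ▸ Finset.mem_of_mem_erase hx⟩
      exact hw'other x hxu hxv
    have e3 : ∑ e ∈ T.filter (fun e => u ∉ e ∧ v ∉ e), ∏ x ∈ e, w' x
        = ∑ e ∈ T.filter (fun e => u ∉ e ∧ v ∉ e), ∏ x ∈ e, w x := by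
      apply Finset.sum_congr rfl
      intro e he
      rw [Finset.mem_filter] at he
      apply Finset.prod_congr rfl
      intro x hx
      exact hw'other x (fun h => he.2.1 (h ▸ hx)) (fun h => he.2.2 (h ▸ hx))
    rw [e1, e3, hw'u, hw'v]
    have := hw v
    nlinarith [hP]

lemma weightBound (T : Finset (Finset (Fin n)))
    (h3 : ∀ e ∈ T, e.card = 3)
    (hc : ∀ A ∈ T, ∀ B ∈ T, A ≠ B → ∀ C ∈ T, ¬((A \ B) ∪ (B \ A) ⊆ C)) :
    ∀ (N : ℕ) (S : Finset (Fin n)) (w : Fin n → ℝ), S.card ≤ N → (∀ v, 0 ≤ w v) →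
      (∀ x ∉ S, w x = 0) → ∑ e ∈ T, ∏ x ∈ e, w x ≤ (∑ v, w v)^3 / 27 := by
  classical
  intro N
  induction N with
  | zero =>
    intro S w hcard hw hsupp
    have hS : S = ∅ := Finset.card_eq_zero.mp (Nat.le_zero.mp hcard)
    refine caseB T h3 hc w hw ?_
    intro u v _ hu _
    exact absurd (hsupp u (by simp [hS])) hu
  | succ N ih =>
    intro S w hcard hw hsupp
    by_cases hcase : ∀ u v : Fin n, u ≠ v → w u ≠ 0 → w v ≠ 0 → ∃ e ∈ T, u ∈ e ∧ v ∈ e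
    · exact caseB T h3 hc w hw hcase
    · push_neg at hcase
      obtain ⟨u, v, huv, hwu, hwv, hno⟩ := hcase
      have hno' : ∀ e ∈ T, ¬(u ∈ e ∧ v ∈ e) := by
        intro e he ⟨h1, h2⟩
        exact (hno e he h1) h2
      have huS : u ∈ S := by by_contra h; exact hwu (hsupp u h)
      have hvS : v ∈ S := by by_contra h; exact hwv (hsupp v h)
      -- wlog on which direction to shift
      rcases le_total (∑ e ∈ T.filter (fun e => v ∈ e), ∏ x ∈ e.erase v, w x)
          (∑ e ∈ T.filter (fun e => u ∈ e), ∏ x ∈ e.erase u, w x) with hP | hP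
      · obtain ⟨w', hw'nn, hw'v, hw'o, hw'sum, hle⟩ := shiftStep T w hw u v huv hno' hP
        have hsupp' : ∀ x ∉ S.erase v, w' x = 0 := by
          intro x hx
          rcases eq_or_ne x v with rfl | hxv
          · exact hw'v
          · have hxS : x ∉ S := fun h => hx (Finset.mem_erase.mpr ⟨hxv, h⟩)
            have hxu : x ≠ u := fun h => hxS (h ▸ huS)
            rw [hw'o x hxu hxv]
            exact hsupp x hxS
        have hcard' : (S.erase v).card ≤ N := by
          have := Finset.card_erase_of_mem hvS
          omega
        calc ∑ e ∈ T, ∏ x ∈ e, w x ≤ ∑ e ∈ T, ∏ x ∈ e, w' x := hle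
          _ ≤ (∑ x, w' x)^3 / 27 := ih (S.erase v) w' hcard' hw'nn hsupp'
          _ = (∑ x, w x)^3 / 27 := by rw [hw'sum]
      · have hno'' : ∀ e ∈ T, ¬(v ∈ e ∧ u ∈ e) := by
          intro e he ⟨h1, h2⟩
          exact hno' e he ⟨h2, h1⟩
        obtain ⟨w', hw'nn, hw'v, hw'o, hw'sum, hle⟩ := shiftStep T w hw v u huv.symm hno'' hP
        have hsupp' : ∀ x ∉ S.erase u, w' x = 0 := by
          intro x hx
          rcases eq_or_ne x u with rfl | hxu
          · exact hw'v
          · have hxS : x ∉ S := fun h => hx (Finset.mem_erase.mpr ⟨hxu, h⟩)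
            have hxv : x ≠ v := fun h => hxS (h ▸ hvS)
            rw [hw'o x hxv hxu]
            exact hsupp x hxS
        have hcard' : (S.erase u).card ≤ N := by
          have := Finset.card_erase_of_mem huS
          omega
        calc ∑ e ∈ T, ∏ x ∈ e, w x ≤ ∑ e ∈ T, ∏ x ∈ e, w' x := hle
          _ ≤ (∑ x, w' x)^3 / 27 := ih (S.erase u) w' hcard' hw'nn hsupp'
          _ = (∑ x, w x)^3 / 27 := by rw [hw'sum]

/-- counting corollary -/
lemma cancel_count (T : Finset (Finset (Fin n)))
    (h3 : ∀ e ∈ T, e.card = 3)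
    (hc : ∀ A ∈ T, ∀ B ∈ T, A ≠ B → ∀ C ∈ T, ¬((A \ B) ∪ (B \ A) ⊆ C)) :
    (T.card : ℝ) ≤ (n : ℝ)^3 / 27 := by
  have := weightBound T h3 hc (Finset.univ.card) Finset.univ (fun _ => (1:ℝ)) le_rfl
    (fun _ => zero_le_one) (fun x hx => absurd (Finset.mem_univ x) hx)
  simp only [Finset.prod_const_one, Finset.sum_const, Finset.card_univ, Fintype.card_fin,
    nsmul_eq_mul, mul_one] at this
  simpa using this

lemma f4_edges : ∀ e ∈ F4, e ⊆ {0, 1, 2} ∨ e ⊆ {1, 2, 3} ∨ e ⊆ ({0, 3} : Finset (Fin 4)) := by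
  decide

lemma copy_of (E : Finset (Finset (Fin n))) (hE : IsComplex E) (a b c d : Fin n)
    (hab : a ≠ b) (hac : a ≠ c) (had : a ≠ d) (hbc : b ≠ c) (hbd : b ≠ d) (hcd : c ≠ d)
    (h1 : ({a, b, c} : Finset (Fin n)) ∈ E) (h2 : ({b, c, d} : Finset (Fin n)) ∈ E)
    (h3 : ({a, d} : Finset (Fin n)) ∈ E) : HasCopy F4 E := by
  classical
  set f : Fin 4 → Fin n := fun i => if i = 0 then a else if i = 1 then b else if i = 2 then c else d with hf
  have hf0 : f 0 = a := rfl
  have hf1 : f 1 = b := rfl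
  have hf2 : f 2 = c := rfl
  have hf3 : f 3 = d := rfl
  refine ⟨f, ?_, ?_⟩
  · intro x y hxy
    fin_cases x <;> fin_cases y <;>
      simp_all [hf0, hf1, hf2, hf3] <;>
      first
        | rfl
        | exact absurd hxy (by assumption)
        | exact absurd hxy.symm (by assumption)
  · intro e he
    rcases f4_edges e he with h | h | h
    · have him : e.image f ⊆ ({a, b, c} : Finset (Fin n)) := by
        calc e.image f ⊆ ({0,1,2} : Finset (Fin 4)).image f := Finset.image_subset_image h
          _ = {a, b, c} := by simp [Finset.image_insert, hf0, hf1, hf2]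
      exact hE _ h1 _ him
    · have him : e.image f ⊆ ({b, c, d} : Finset (Fin n)) := by
        calc e.image f ⊆ ({1,2,3} : Finset (Fin 4)).image f := Finset.image_subset_image h
          _ = {b, c, d} := by simp [Finset.image_insert, hf1, hf2, hf3]
      exact hE _ h2 _ him
    · have him : e.image f ⊆ ({a, d} : Finset (Fin n)) := by
        calc e.image f ⊆ ({0,3} : Finset (Fin 4)).image f := Finset.image_subset_image h
          _ = {a, d} := by simp [Finset.image_insert, hf0, hf3]
      exact hE _ h3 _ him

lemma no_big_edges (E : Finset (Finset (Fin n))) (hE : IsComplex E) (hfree : ¬ HasCopy F4 E) :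
    ∀ e ∈ E, e.card ≤ 3 := by
  intro e he
  by_contra h
  push_neg at h
  obtain ⟨t, hts, htc⟩ := Finset.exists_subset_card_eq (s := e) (n := 4) h
  obtain ⟨a, t', hat', hins, ht'c⟩ := Finset.card_eq_succ.mp htc
  obtain ⟨b, c, d, hbc, hbd, hcd, rfl⟩ := Finset.card_eq_three.mp ht'c
  have hab : a ≠ b := fun h => hat' (h ▸ (by simp : b ∈ ({b,c,d} : Finset (Fin n))))
  have hac : a ≠ c := fun h => hat' (h ▸ (by simp : c ∈ ({b,c,d} : Finset (Fin n))))
  have had : a ≠ d := fun h => hat' (h ▸ (by simp : d ∈ ({b,c,d} : Finset (Fin n))))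
  have hsub : ∀ x ∈ ({a,b,c,d} : Finset (Fin n)), x ∈ e := by
    intro x hx
    apply hts
    rw [← hins]
    simpa using hx
  apply hfree
  refine copy_of E hE a b c d hab hac had hbc hbd hcd ?_ ?_ ?_ <;>
    [ exact hE e he _ (fun x hx => hsub x (by revert hx; simp; tauto));
      exact hE e he _ (fun x hx => hsub x (by revert hx; simp; tauto));
      exact hE e he _ (fun x hx => hsub x (by revert hx; simp; tauto))]

lemma cancellative_of_free (E : Finset (Finset (Fin n))) (hE : IsComplex E)
    (hfree : ¬ HasCopy F4 E) :
    ∀ A ∈ E.filter (fun e => e.card = 3), ∀ B ∈ E.filter (fun e => e.card = 3), A ≠ B →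
      ∀ C ∈ E.filter (fun e => e.card = 3), ¬((A \ B) ∪ (B \ A) ⊆ C) := by
  classical
  intro A hA B hB hne C hC hsub
  rw [Finset.mem_filter] at hA hB hC
  obtain ⟨hAE, hA3⟩ := hA
  obtain ⟨hBE, hB3⟩ := hB
  obtain ⟨hCE, hC3⟩ := hC
  have hdisj : Disjoint (A \ B) (B \ A) := disjoint_sdiff_sdiff
  have hk3 : (A ∩ B).card ≠ 3 := by
    intro h
    have h1 : A ∩ B = A := Finset.eq_of_subset_of_card_le Finset.inter_subset_left (by omega)
    have h2 : A ⊆ B := by rw [← h1]; exact Finset.inter_subset_right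
    exact hne (Finset.eq_of_subset_of_card_le h2 (by omega))
  have hABk : (A ∩ B).card + (A \ B).card = A.card := Finset.card_inter_add_card_sdiff A B
  have hBAk : (B ∩ A).card + (B \ A).card = B.card := Finset.card_inter_add_card_sdiff B A
  rw [Finset.inter_comm] at hBAk
  have hle : ((A \ B) ∪ (B \ A)).card ≤ 3 := hC3 ▸ Finset.card_le_card hsub
  rw [Finset.card_union_of_disjoint hdisj] at hle
  have hk2 : (A ∩ B).card = 2 := by
    have : (A ∩ B).card ≤ 3 := by
      calc (A ∩ B).card ≤ A.card := Finset.card_le_card Finset.inter_subset_left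
        _ = 3 := hA3
    omega
  obtain ⟨b, c, hbc, hbc2⟩ := Finset.card_eq_two.mp hk2
  obtain ⟨a, ha⟩ := Finset.card_eq_one.mp (show (A \ B).card = 1 by omega)
  obtain ⟨d, hd⟩ := Finset.card_eq_one.mp (show (B \ A).card = 1 by omega)
  have haA : a ∈ A \ B := ha ▸ Finset.mem_singleton_self a
  have hdB : d ∈ B \ A := hd ▸ Finset.mem_singleton_self d
  rw [Finset.mem_sdiff] at haA hdB
  have hbAB : b ∈ A ∩ B := hbc2 ▸ (by simp : b ∈ ({b,c} : Finset (Fin n)))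
  have hcAB : c ∈ A ∩ B := hbc2 ▸ (by simp : c ∈ ({b,c} : Finset (Fin n)))
  rw [Finset.mem_inter] at hbAB hcAB
  have hab : a ≠ b := fun h => haA.2 (h ▸ hbAB.2)
  have hac : a ≠ c := fun h => haA.2 (h ▸ hcAB.2)
  have had : a ≠ d := fun h => hdB.2 (h ▸ haA.1)
  have hbd : b ≠ d := fun h => hdB.2 (h ▸ hbAB.1)
  have hcd : c ≠ d := fun h => hdB.2 (h ▸ hcAB.1)
  apply hfree
  refine copy_of E hE a b c d hab hac had hbc hbd hcd ?_ ?_ ?_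
  · refine hE A hAE _ ?_
    intro x hx
    simp only [Finset.mem_insert, Finset.mem_singleton] at hx
    rcases hx with rfl | rfl | rfl
    · exact haA.1
    · exact hbAB.1
    · exact hcAB.1
  · refine hE B hBE _ ?_
    intro x hx
    simp only [Finset.mem_insert, Finset.mem_singleton] at hx
    rcases hx with rfl | rfl | rfl
    · exact hbAB.2
    · exact hcAB.2
    · exact hdB.1
  · refine hE C hCE _ ?_
    intro x hx
    simp only [Finset.mem_insert, Finset.mem_singleton] at hx
    rcases hx with rfl | rfl
    · exact hsub (Finset.mem_union_left _ (by rw [ha]; simp))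
    · exact hsub (Finset.mem_union_right _ (by rw [hd]; simp))

lemma small_edges_count (E : Finset (Finset (Fin n))) (hsmall : ∀ e ∈ E, e.card ≤ 3) :
    (E.filter (fun e => ¬ e.card = 3)).card ≤ n^2 + n + 1 := by
  classical
  have hsub : E.filter (fun e => ¬ e.card = 3) ⊆
      (Finset.univ.powersetCard 0 ∪ Finset.univ.powersetCard 1 ∪
        Finset.univ.powersetCard 2 : Finset (Finset (Fin n))) := by
    intro e he
    rw [Finset.mem_filter] at he
    have h2 : e.card ≤ 2 := by have := hsmall e he.1; omega
    simp only [Finset.mem_union, Finset.mem_powersetCard]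
    interval_cases h : e.card
    · exact Or.inl (Or.inl ⟨Finset.subset_univ e, rfl⟩)
    · exact Or.inl (Or.inr ⟨Finset.subset_univ e, rfl⟩)
    · exact Or.inr ⟨Finset.subset_univ e, rfl⟩
  calc (E.filter (fun e => ¬ e.card = 3)).card
      ≤ (Finset.univ.powersetCard 0 ∪ Finset.univ.powersetCard 1 ∪
        (Finset.univ.powersetCard 2 : Finset (Finset (Fin n)))).card := Finset.card_le_card hsub
    _ ≤ (Finset.univ.powersetCard 0 ∪ (Finset.univ.powersetCard 1 : Finset (Finset (Fin n)))).card
        + (Finset.univ.powersetCard 2 : Finset (Finset (Fin n))).card := Finset.card_union_le _ _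
    _ ≤ (Finset.univ.powersetCard 0 : Finset (Finset (Fin n))).card
        + (Finset.univ.powersetCard 1 : Finset (Finset (Fin n))).card
        + (Finset.univ.powersetCard 2 : Finset (Finset (Fin n))).card := by
          have := Finset.card_union_le (Finset.univ.powersetCard 0 : Finset (Finset (Fin n)))
            (Finset.univ.powersetCard 1)
          omega
    _ ≤ n^2 + n + 1 := by
        rw [Finset.card_powersetCard, Finset.card_powersetCard, Finset.card_powersetCard,
          Finset.card_univ, Fintype.card_fin]
        have h0 : n.choose 0 = 1 := Nat.choose_zero_right n
        have h1 : n.choose 1 = n := Nat.choose_one_right n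
        have h2 : n.choose 2 ≤ n^2 := by
          rw [Nat.choose_two_right]
          calc n * (n-1) / 2 ≤ n * (n-1) := Nat.div_le_self _ _
            _ ≤ n * n := Nat.mul_le_mul_left n (Nat.sub_le n 1)
            _ = n^2 := (sq n).symm
        omega

def Elow (n : ℕ) : Finset (Finset (Fin n)) :=
  Finset.univ.filter (fun e : Finset (Fin n) => ∀ u ∈ e, ∀ v ∈ e, (u:ℕ) % 3 = (v:ℕ) % 3 → u = v)

lemma Elow_complex : IsComplex (Elow n) := by
  intro e he f hf
  rw [Elow, Finset.mem_filter] at he ⊢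
  exact ⟨Finset.mem_univ f, fun u hu v hv h => he.2 u (hf hu) v (hf hv) h⟩

lemma Elow_free : ¬ HasCopy F4 (Elow n) := by
  rintro ⟨f, hinj, hmap⟩
  have hA := hmap {0,1,2} (by decide)
  have hB := hmap {1,2,3} (by decide)
  have hC := hmap {0,3} (by decide)
  have himA : ({0,1,2} : Finset (Fin 4)).image f = {f 0, f 1, f 2} := by
    simp [Finset.image_insert]
  have himB : ({1,2,3} : Finset (Fin 4)).image f = {f 1, f 2, f 3} := by
    simp [Finset.image_insert]
  have himC : ({0,3} : Finset (Fin 4)).image f = {f 0, f 3} := by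
    simp [Finset.image_insert]
  rw [himA, Elow, Finset.mem_filter] at hA
  rw [himB, Elow, Finset.mem_filter] at hB
  rw [himC, Elow, Finset.mem_filter] at hC
  have ne01 : f 0 ≠ f 1 := fun h => by have := hinj h; simp at this
  have ne02 : f 0 ≠ f 2 := fun h => by have := hinj h; simp at this
  have ne03 : f 0 ≠ f 3 := fun h => by have := hinj h; simp at this
  have ne12 : f 1 ≠ f 2 := fun h => by have := hinj h; simp at this
  have ne13 : f 1 ≠ f 3 := fun h => by have := hinj h; simp at this
  have ne23 : f 2 ≠ f 3 := fun h => by have := hinj h; simp at this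
  have m0A : f 0 ∈ ({f 0, f 1, f 2} : Finset (Fin n)) := by simp
  have m1A : f 1 ∈ ({f 0, f 1, f 2} : Finset (Fin n)) := by simp
  have m2A : f 2 ∈ ({f 0, f 1, f 2} : Finset (Fin n)) := by simp
  have m1B : f 1 ∈ ({f 1, f 2, f 3} : Finset (Fin n)) := by simp
  have m2B : f 2 ∈ ({f 1, f 2, f 3} : Finset (Fin n)) := by simp
  have m3B : f 3 ∈ ({f 1, f 2, f 3} : Finset (Fin n)) := by simp
  have m0C : f 0 ∈ ({f 0, f 3} : Finset (Fin n)) := by simp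
  have m3C : f 3 ∈ ({f 0, f 3} : Finset (Fin n)) := by simp
  have r01 : ((f 0 : Fin n) : ℕ) % 3 ≠ ((f 1 : Fin n) : ℕ) % 3 := fun h => ne01 (hA.2 _ m0A _ m1A h)
  have r02 : ((f 0 : Fin n) : ℕ) % 3 ≠ ((f 2 : Fin n) : ℕ) % 3 := fun h => ne02 (hA.2 _ m0A _ m2A h)
  have r12 : ((f 1 : Fin n) : ℕ) % 3 ≠ ((f 2 : Fin n) : ℕ) % 3 := fun h => ne12 (hA.2 _ m1A _ m2A h)
  have r13 : ((f 1 : Fin n) : ℕ) % 3 ≠ ((f 3 : Fin n) : ℕ) % 3 := fun h => ne13 (hB.2 _ m1B _ m3B h)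
  have r23 : ((f 2 : Fin n) : ℕ) % 3 ≠ ((f 3 : Fin n) : ℕ) % 3 := fun h => ne23 (hB.2 _ m2B _ m3B h)
  have r03 : ((f 0 : Fin n) : ℕ) % 3 ≠ ((f 3 : Fin n) : ℕ) % 3 := fun h => ne03 (hC.2 _ m0C _ m3C h)
  have b0 : ((f 0 : Fin n) : ℕ) % 3 < 3 := Nat.mod_lt _ (by norm_num)
  have b1 : ((f 1 : Fin n) : ℕ) % 3 < 3 := Nat.mod_lt _ (by norm_num)
  have b2 : ((f 2 : Fin n) : ℕ) % 3 < 3 := Nat.mod_lt _ (by norm_num)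
  have b3 : ((f 3 : Fin n) : ℕ) % 3 < 3 := Nat.mod_lt _ (by norm_num)
  omega

lemma class_card (i : ℕ) (hi : i < 3) :
    n / 3 ≤ (Finset.univ.filter (fun v : Fin n => (v:ℕ) % 3 = i)).card := by
  have hdm : 3 * (n/3) ≤ n := Nat.mul_div_le n 3
  have key : ∀ j : Fin (n/3), 3 * (j:ℕ) + i < n := by
    intro j
    have hj := j.2
    omega
  calc n / 3 = (Finset.univ : Finset (Fin (n/3))).card := by
        rw [Finset.card_univ, Fintype.card_fin]
    _ ≤ (Finset.univ.filter (fun v : Fin n => (v:ℕ) % 3 = i)).card := by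
        apply Finset.card_le_card_of_injOn (fun j : Fin (n/3) => (⟨3 * (j:ℕ) + i, key j⟩ : Fin n))
        · intro j _
          rw [Finset.mem_coe, Finset.mem_filter]
          refine ⟨Finset.mem_univ _, ?_⟩
          simp only
          omega
        · intro j _ j' _ h
          have : 3 * (j:ℕ) + i = 3 * (j':ℕ) + i := congrArg Fin.val h
          exact Fin.ext (by omega)

lemma Elow_card : (n/3)^3 ≤ (Elow n).card := by
  classical
  set C0 := Finset.univ.filter (fun v : Fin n => (v:ℕ) % 3 = 0) with hC0
  set C1 := Finset.univ.filter (fun v : Fin n => (v:ℕ) % 3 = 1) with hC1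
  set C2 := Finset.univ.filter (fun v : Fin n => (v:ℕ) % 3 = 2) with hC2
  set S := C0 ×ˢ (C1 ×ˢ C2) with hS
  set φ : Fin n × Fin n × Fin n → Finset (Fin n) := fun p => {p.1, p.2.1, p.2.2} with hφ
  have hres : ∀ p ∈ S, ((p.1:ℕ) % 3 = 0 ∧ ((p.2.1:ℕ)) % 3 = 1 ∧ ((p.2.2:ℕ)) % 3 = 2) := by
    intro p hp
    rw [hS, Finset.mem_product, Finset.mem_product] at hp
    obtain ⟨h1, h2, h3⟩ := hp
    rw [hC0, Finset.mem_filter] at h1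
    rw [hC1, Finset.mem_filter] at h2
    rw [hC2, Finset.mem_filter] at h3
    exact ⟨h1.2, h2.2, h3.2⟩
  have hinj : Set.InjOn φ S := by
    intro p hp q hq h
    obtain ⟨hp1, hp2, hp3⟩ := hres p hp
    obtain ⟨hq1, hq2, hq3⟩ := hres q hq
    have hm1 : p.1 ∈ ({q.1, q.2.1, q.2.2} : Finset (Fin n)) := by
      rw [show ({q.1, q.2.1, q.2.2} : Finset (Fin n)) = φ q from rfl, ← h, hφ]; simp
    have hm2 : p.2.1 ∈ ({q.1, q.2.1, q.2.2} : Finset (Fin n)) := by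
      rw [show ({q.1, q.2.1, q.2.2} : Finset (Fin n)) = φ q from rfl, ← h, hφ]; simp
    have hm3 : p.2.2 ∈ ({q.1, q.2.1, q.2.2} : Finset (Fin n)) := by
      rw [show ({q.1, q.2.1, q.2.2} : Finset (Fin n)) = φ q from rfl, ← h, hφ]; simp
    simp only [Finset.mem_insert, Finset.mem_singleton] at hm1 hm2 hm3
    have e1 : p.1 = q.1 := by
      rcases hm1 with h' | h' | h'
      · exact h'
      · rw [h'] at hp1; omega
      · rw [h'] at hp1; omega
    have e2 : p.2.1 = q.2.1 := by
      rcases hm2 with h' | h' | h'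
      · rw [h'] at hp2; omega
      · exact h'
      · rw [h'] at hp2; omega
    have e3 : p.2.2 = q.2.2 := by
      rcases hm3 with h' | h' | h'
      · rw [h'] at hp3; omega
      · rw [h'] at hp3; omega
      · exact h'
    exact Prod.ext e1 (Prod.ext e2 e3)
  have hmaps : ∀ p ∈ S, φ p ∈ Elow n := by
    intro p hp
    obtain ⟨hp1, hp2, hp3⟩ := hres p hp
    rw [Elow, Finset.mem_filter]
    refine ⟨Finset.mem_univ _, ?_⟩
    intro u hu v hv huv
    rw [hφ] at hu hv
    simp only [Finset.mem_insert, Finset.mem_singleton] at hu hv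
    rcases hu with rfl | rfl | rfl <;> rcases hv with rfl | rfl | rfl <;> first
      | rfl
      | (rw [hp1] at huv; rw [hp2] at huv; omega)
      | (rw [hp1] at huv; rw [hp3] at huv; omega)
      | (rw [hp2] at huv; rw [hp3] at huv; omega)
      | (rw [hp2] at huv; rw [hp1] at huv; omega)
      | (rw [hp3] at huv; rw [hp1] at huv; omega)
      | (rw [hp3] at huv; rw [hp2] at huv; omega)
  calc (n/3)^3 ≤ S.card := by
        rw [hS, Finset.card_product, Finset.card_product]
        have k0 := class_card (n := n) 0 (by norm_num)
        have k1 := class_card (n := n) 1 (by norm_num)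
        have k2 := class_card (n := n) 2 (by norm_num)
        calc (n/3)^3 = (n/3) * ((n/3) * (n/3)) := by ring
          _ ≤ C0.card * (C1.card * C2.card) :=
            Nat.mul_le_mul k0 (Nat.mul_le_mul k1 k2)
    _ = (S.image φ).card := (Finset.card_image_of_injOn hinj).symm
    _ ≤ (Elow n).card := Finset.card_le_card (by
        intro e he
        rw [Finset.mem_image] at he
        obtain ⟨p, hp, rfl⟩ := he
        exact hmaps p hp)

lemma zero_mem_exSet :
    0 ∈ {m | ∃ E : Finset (Finset (Fin n)), IsComplex E ∧ ¬ HasCopy F4 E ∧ E.card = m} := by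
  refine ⟨∅, ?_, ?_, Finset.card_empty⟩
  · intro e he
    exact absurd he (Finset.notMem_empty e)
  · rintro ⟨f, hf, hm⟩
    have h := hm ∅ (by decide)
    simpa using h

lemma bdd_exSet :
    BddAbove {m | ∃ E : Finset (Finset (Fin n)), IsComplex E ∧ ¬ HasCopy F4 E ∧ E.card = m} := by
  refine ⟨2^n, ?_⟩
  rintro m ⟨E, _, _, rfl⟩
  calc E.card ≤ (Finset.univ : Finset (Finset (Fin n))).card := Finset.card_le_univ E
    _ = 2^n := by rw [Finset.card_univ, Fintype.card_finset, Fintype.card_fin]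

lemma exSC_spec :
    ∃ E : Finset (Finset (Fin n)), IsComplex E ∧ ¬ HasCopy F4 E ∧ E.card = exSC n F4 :=
  Nat.sSup_mem ⟨0, zero_mem_exSet⟩ bdd_exSet

lemma exSC_ge (E : Finset (Finset (Fin n))) (h1 : IsComplex E) (h2 : ¬ HasCopy F4 E) :
    E.card ≤ exSC n F4 :=
  le_csSup bdd_exSet ⟨E, h1, h2, rfl⟩


lemma exSC_upper (n : ℕ) : (exSC n F4 : ℝ) ≤ (n:ℝ)^3/27 + ((n:ℝ)^2 + (n:ℝ) + 1) := by
  classical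
  obtain ⟨E, hEc, hEf, hEcard⟩ := exSC_spec (n := n)
  rw [← hEcard]
  have hsmall := no_big_edges E hEc hEf
  have hT := cancel_count (E.filter (fun e => e.card = 3))
    (fun e he => (Finset.mem_filter.mp he).2) (cancellative_of_free E hEc hEf)
  have hS := small_edges_count E hsmall
  have hsplit := Finset.card_filter_add_card_filter_not (s := E) (p := fun e => e.card = 3)
  have hSc : ((E.filter (fun e => ¬ e.card = 3)).card : ℝ) ≤ (n:ℝ)^2 + (n:ℝ) + 1 := by
    have h' : ((E.filter (fun e => ¬ e.card = 3)).card : ℝ) ≤ ((n^2 + n + 1 : ℕ) : ℝ) :=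
      Nat.cast_le.mpr hS
    push_cast at h'
    linarith
  have hEq : (E.card : ℝ) = ((E.filter (fun e => e.card = 3)).card : ℝ)
      + ((E.filter (fun e => ¬ e.card = 3)).card : ℝ) := by
    exact_mod_cast hsplit.symm
  rw [hEq]
  linarith

theorem statement6 (ε : ℝ) (hε : 0 < ε) : ∃ n0 : ℕ, ∀ n : ℕ, n0 ≤ n →
    (2 / 9 - ε) * (n.choose 3 : ℝ) ≤ (exSC n F4 : ℝ) ∧
    (exSC n F4 : ℝ) ≤ (2 / 9 + ε) * (n.choose 3 : ℝ) := by
  obtain ⟨n0, hn0⟩ := exists_nat_gt (max 4 (200 / ε))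
  refine ⟨n0, fun n hn => ?_⟩
  have hcast : (n0:ℝ) ≤ n := Nat.cast_le.mpr hn
  have hx4 : (4:ℝ) ≤ (n:ℝ) := le_trans (le_of_lt ((le_max_left 4 (200/ε)).trans_lt hn0)) hcast
  have hn4 : 4 ≤ n := by exact_mod_cast hx4
  have hex : 200 ≤ ε * n := by
    have h1 : 200/ε < (n:ℝ) := ((le_max_right 4 (200/ε)).trans_lt hn0).trans_le hcast
    have h2 := (div_lt_iff₀ hε).mp h1
    nlinarith
  have hch : (n.choose 3 : ℝ) = (n:ℝ) * ((n:ℝ)-1) * ((n:ℝ)-2) / 6 := cast_choose3 (by omega)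
  set x : ℝ := (n:ℝ) with hxdef
  have hprod : 200 * ((x-1)*(x-2)) ≤ (ε*x) * ((x-1)*(x-2)) :=
    mul_le_mul_of_nonneg_right hex (by nlinarith)
  constructor
  · -- lower bound
    have h1 : (x - 2)/3 ≤ ((n/3 : ℕ) : ℝ) := by
      have hnat : n ≤ 3 * (n/3) + 2 := by omega
      have hc : (n:ℝ) ≤ 3 * ((n/3:ℕ):ℝ) + 2 := by exact_mod_cast hnat
      linarith
    have h2 : (((n/3:ℕ):ℝ))^3 ≤ (((Elow n).card) : ℝ) := by exact_mod_cast Elow_card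
    have h3 : (((Elow n).card) : ℝ) ≤ (exSC n F4 : ℝ) :=
      Nat.cast_le.mpr (exSC_ge _ Elow_complex Elow_free)
    have h4 : ((x-2)/3)^3 ≤ (((n/3:ℕ):ℝ))^3 := pow_le_pow_left₀ (by linarith) h1 3
    have h5 : (2/9 - ε) * (n.choose 3 : ℝ) ≤ ((x-2)/3)^3 := by
      rw [hch]
      nlinarith [hprod, sq_nonneg (x-2), mul_nonneg (by linarith : (0:ℝ) ≤ x-2) (by linarith : (0:ℝ) ≤ x-1)]
    linarith
  · -- upper bound
    have h5 : x^3/27 + (x^2 + x + 1) ≤ (2/9 + ε) * (n.choose 3 : ℝ) := by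
      rw [hch]
      nlinarith [hprod, sq_nonneg x, sq_nonneg (x-2), mul_nonneg (by linarith : (0:ℝ) ≤ x-2) (by linarith : (0:ℝ) ≤ x-1)]
    linarith [exSC_upper n]

end Proof
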